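/- Let G = (I, A, src, tgt, o, d) be a condensed DAG with A nonempty. Then for every integer k with 1 ≤ k ≤ m(G), there exists an arc a ∈ A with height m_a = k. -/

import Mathlib

/-- A condensed DAG: finite node set `I`, finite arc set `A`, arc endpoint maps
`src, tgt : A → I`, distinct origin `o` and destination `d`, no directed cycles,
and every arc lies on at least one route from `o` to `d`. -/
structure CondensedDAG (I : Type*) (A : Type*) [Fintype I] [Fintype A] where
  src : A → I
  tgt : A → I
  o : I
  d : I
  o_ne_d : o ≠ d
  /-- No directed cycle: there is no nonempty chain of consecutive arcs whose
  last arc's target is the first arc's source. -/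
  acyclic : ∀ (a : A) (l : List A),
      List.Chain' (fun x y => tgt x = src y) (a :: l) →
      tgt ((a :: l).getLast (List.cons_ne_nil a l)) ≠ src a
  /-- Every arc lies on at least one route from `o` to `d`. -/
  covered : ∀ a : A, ∃ r : List A,
      (r ≠ [] ∧ (∀ b ∈ r.head?, src b = o) ∧ (∀ b ∈ r.getLast?, tgt b = d) ∧
        List.Chain' (fun x y => tgt x = src y) r) ∧ a ∈ r

namespace CondensedDAG

variable {I A : Type*} [Fintype I] [Fintype A]

/-- A route: a nonempty list of consecutive arcs starting at `o` and ending at `d`. -/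
def IsRoute (G : CondensedDAG I A) (r : List A) : Prop :=
  r ≠ [] ∧ (∀ b ∈ r.head?, G.src b = G.o) ∧ (∀ b ∈ r.getLast?, G.tgt b = G.d) ∧
    List.Chain' (fun x y => G.tgt x = G.src y) r

/-- The depth `ℓ_a` of an arc: the largest (1-based) position at which `a`
occurs in some route. -/
noncomputable def depth (G : CondensedDAG I A) (a : A) : ℕ :=
  sSup {k : ℕ | 1 ≤ k ∧ ∃ r : List A, G.IsRoute r ∧ r[k - 1]? = some a}

/-- The depth `ℓ(G)` of the condensed DAG: maximal depth over all arcs. -/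
noncomputable def graphDepth (G : CondensedDAG I A) : ℕ :=
  sSup (Set.range G.depth)

/-- The height `m_a` of an arc: the largest value of `|r| + 1 - ℓ_{a,r}` over
routes `r` containing `a` at (1-based) position `ℓ_{a,r}`. -/
noncomputable def height (G : CondensedDAG I A) (a : A) : ℕ :=
  sSup {k : ℕ | ∃ (r : List A) (j : ℕ), G.IsRoute r ∧ 1 ≤ j ∧ r[j - 1]? = some a ∧
    k = r.length + 1 - j}

/-- The height `m(G)` of the condensed DAG: maximal height over all arcs. -/
noncomputable def graphHeight (G : CondensedDAG I A) : ℕ :=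
  sSup (Set.range G.height)

end CondensedDAG



namespace CondensedDAG

variable {I A : Type*} [Fintype I] [Fintype A]

def IsRoute' (G : CondensedDAG I A) (r : List A) : Prop := G.IsRoute r

/-- Routes have no duplicate arcs. -/
theorem route_nodup (G : CondensedDAG I A) {r : List A} (hr : G.IsRoute r) : r.Nodup := by
  by_contra h
  rw [List.nodup_iff_injective_get] at h
  obtain ⟨⟨i, hi⟩, ⟨j, hj⟩, heq, hne⟩ := Function.not_injective_iff.mp h
  have hne' : i ≠ j := fun hh => hne (by subst hh; rfl)
  clear hne
  wlog hij : i < j generalizing i j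
  · exact this j hj i hi heq.symm hne'.symm (by omega)
  set w : List A := (r.drop i).take (j - i) with hc
  have hclen : w.length = j - i := by simp [hc]; omega
  have hcne : w ≠ [] := by
    intro h0; rw [h0] at hclen; simp at hclen; omega
  obtain ⟨hd, tl, hcons⟩ := List.exists_cons_of_ne_nil hcne
  have hcinf : w <:+: r :=
    (List.take_prefix _ _).isInfix.trans (List.drop_suffix _ _).isInfix
  have hchain : List.Chain' (fun x y => G.tgt x = G.src y) r := hr.2.2.2
  have hcchain := hchain.infix hcinf
  have hc0 : w[0]? = some r[i] := by
    rw [hc, List.getElem?_take, if_pos (by omega), List.getElem?_drop]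
    simp [List.getElem?_eq_getElem (by omega : i + 0 < r.length)]
  have hhd : hd = r[i] := by
    rw [hcons] at hc0; simpa using hc0
  have hclast : w.getLast? = some r[j-1] := by
    rw [List.getLast?_eq_getElem?, hclen, hc, List.getElem?_take, if_pos (by omega),
      List.getElem?_drop]
    have : i + (j - i - 1) = j - 1 := by omega
    rw [this]
    simp [List.getElem?_eq_getElem (by omega : j - 1 < r.length)]
  have hlink : G.tgt r[j-1] = G.src r[j] := by
    have := List.isChain_iff_getElem.mp hchain (j-1) (by omega)
    have hj1 : j - 1 + 1 = j := by omega
    simp only [hj1] at this; exact this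
  have hgetlast : (hd :: tl).getLast (List.cons_ne_nil hd tl) = r[j-1] := by
    have := hclast
    rw [hcons, List.getLast?_eq_getLast (List.cons_ne_nil hd tl)] at this
    simpa using this
  have := G.acyclic hd tl (hcons ▸ hcchain)
  rw [hgetlast, hhd] at this
  apply this
  rw [hlink]
  congr 1
  simp only [List.get_eq_getElem] at heq
  exact heq.symm

def heightSet (G : CondensedDAG I A) (a : A) : Set ℕ :=
  {k : ℕ | ∃ (r : List A) (j : ℕ), G.IsRoute r ∧ 1 ≤ j ∧ r[j - 1]? = some a ∧
    k = r.length + 1 - j}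

theorem height_eq_sSup (G : CondensedDAG I A) (a : A) : G.height a = sSup (G.heightSet a) := rfl

theorem heightSet_bddAbove (G : CondensedDAG I A) (a : A) :
    BddAbove (G.heightSet a) := by
  refine ⟨Fintype.card A, fun k hk => ?_⟩
  obtain ⟨r, j, hr, hj, ha, hk⟩ := hk
  have hlen : j - 1 < r.length := (List.getElem?_eq_some_iff.mp ha).1
  have := (G.route_nodup hr).length_le_card
  omega

theorem heightSet_nonempty (G : CondensedDAG I A) (a : A) :
    (G.heightSet a).Nonempty := by
  obtain ⟨r, hr, ha⟩ := G.covered a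
  obtain ⟨n, hn, hna⟩ := List.mem_iff_getElem.mp ha
  exact ⟨r.length - n, r, n + 1, hr, by omega, by
    simpa using (List.getElem?_eq_getElem hn).trans (by rw [hna]), by omega⟩

theorem height_mem (G : CondensedDAG I A) (a : A) : G.height a ∈ G.heightSet a :=
  Nat.sSup_mem (G.heightSet_nonempty a) (G.heightSet_bddAbove a)

/-- The splicing lemma: if `a` occurs at position `j` in route `r` and
`tgt a = src b`, then `height b + 1 ≤ height a`. -/
theorem height_succ_le (G : CondensedDAG I A) {a b : A} {r : List A} {j : ℕ}
    (hr : G.IsRoute r) (hj : 1 ≤ j) (ha : r[j - 1]? = some a)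
    (hab : G.tgt a = G.src b) : G.height b + 1 ≤ G.height a := by
  obtain ⟨r', j', hr', hj', hb, heq⟩ := G.height_mem b
  have hlen : j - 1 < r.length := (List.getElem?_eq_some_iff.mp ha).1
  have hlen' : j' - 1 < r'.length := (List.getElem?_eq_some_iff.mp hb).1
  set s : List A := r.take j ++ r'.drop (j' - 1) with hs
  have hslen : s.length = j + (r'.length - (j' - 1)) := by
    simp [hs]; omega
  have htakelen : (r.take j).length = j := by simp; omega
  have hs0 : ∀ n, n < j → s[n]? = r[n]? := by
    intro n hn
    rw [hs, List.getElem?_append_left (by omega), List.getElem?_take, if_pos hn]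
  have hsroute : G.IsRoute s := by
    refine ⟨?_, ?_, ?_, ?_⟩
    · intro h0; rw [h0] at hslen; simp at hslen; omega
    · intro b' hb'
      apply hr.2.1
      rw [List.head?_eq_getElem?] at hb' ⊢
      rwa [hs0 0 (by omega)] at hb'
    · intro b' hb'
      apply hr'.2.2.1
      rw [List.getLast?_eq_getElem?] at hb' ⊢
      have hcond : (r.take j).length ≤ (r.take j ++ r'.drop (j' - 1)).length - 1 := by
        simp; omega
      rw [hs, List.getElem?_append_right hcond, List.getElem?_drop] at hb'
      have harith : j' - 1 + ((r.take j ++ r'.drop (j' - 1)).length - 1 - (r.take j).length)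
          = r'.length - 1 := by
        simp; omega
      rwa [harith] at hb'
    · rw [hs]; apply List.isChain_append.mpr
      refine ⟨hr.2.2.2.infix (List.take_prefix _ _).isInfix,
        hr'.2.2.2.infix (List.drop_suffix _ _).isInfix, ?_⟩
      intro x hx y hy
      rw [List.getLast?_eq_getElem?, htakelen, List.getElem?_take, if_pos (by omega)] at hx
      rw [ha] at hx
      rw [List.head?_drop, hb] at hy
      simp only [Option.mem_def, Option.some.injEq] at hx hy
      rw [← hx, ← hy]; exact hab
  have hsa : s[j - 1]? = some a := by rw [hs0 (j-1) (by omega)]; exact ha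
  have hmem : s.length + 1 - j ∈ G.heightSet a := ⟨s, j, hsroute, hj, hsa, rfl⟩
  have hle := le_csSup (G.heightSet_bddAbove a) hmem
  rw [G.height_eq_sSup a]
  have : s.length + 1 - j = G.height b + 1 := by rw [hslen, heq]; omega
  omega

theorem one_le_height (G : CondensedDAG I A) (a : A) : 1 ≤ G.height a := by
  obtain ⟨r, j, hr, hj, ha, heq⟩ := G.height_mem a
  have := (List.getElem?_eq_some_iff.mp ha).1
  omega

theorem descent (G : CondensedDAG I A) (k : ℕ) (hk : 1 ≤ k) :
    ∀ (n : ℕ) (a : A), G.height a = k + n → ∃ b : A, G.height b = k := by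
  intro n
  induction n with
  | zero => exact fun a h => ⟨a, h⟩
  | succ n ih =>
    intro a h
    obtain ⟨r, j, hr, hj, ha, heq⟩ := G.height_mem a
    have hlen : j - 1 < r.length := (List.getElem?_eq_some_iff.mp ha).1
    have hjlt : j < r.length := by omega
    have hb : r[j]? = some r[j] := List.getElem?_eq_getElem hjlt
    have hab : G.tgt a = G.src r[j] := by
      have hch := List.isChain_iff_getElem.mp hr.2.2.2 (j - 1) (by omega)
      have hj1 : j - 1 + 1 = j := by omega
      simp only [hj1] at hch
      have hja : r[j-1] = a := (List.getElem?_eq_some_iff.mp ha).2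
      rw [← hja]
      exact hch
    have h1 : k + n ≤ G.height r[j] := by
      have hmem : r.length + 1 - (j + 1) ∈ G.heightSet r[j] :=
        ⟨r, j + 1, hr, by omega, by simp, rfl⟩
      have := le_csSup (G.heightSet_bddAbove r[j]) hmem
      rw [G.height_eq_sSup r[j]]
      omega
    have h2 : G.height r[j] + 1 ≤ G.height a := G.height_succ_le hr hj ha hab
    exact ih r[j] (by omega)

end CondensedDAG

/-- in a condensed DAG with `A` nonempty, every height level
`1 ≤ k ≤ m(G)` is attained by some arc. -/
theorem exists_arc_of_each_height
    {I A : Type*} [Fintype I] [Fintype A] [Nonempty A]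
    (G : CondensedDAG I A) (k : ℕ) (hk1 : 1 ≤ k) (hk2 : k ≤ G.graphHeight) :
    ∃ a : A, G.height a = k := by
  obtain ⟨a0, ha0⟩ := (Set.range_nonempty G.height).csSup_mem (Set.finite_range G.height)
  have hk2' : k ≤ sSup (Set.range G.height) := hk2
  exact G.descent k hk1 (G.height a0 - k) a0 (by omega)
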